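/- arXiv:1709.04435 — 2 statements merged into one kernel-verified Lean document; each statement's English description precedes it below -/
import Mathlib

section
/- Let K be a commutative ring with identity, let K⟨X⟩ be a free K-algebra, let R be a K-subalgebra of K⟨X⟩ such that the quotient K-module K⟨X⟩/R is finitely generated, and let I ⊆ R be a two-sided ideal of K⟨X⟩ that is finitely generated as an ideal of K⟨X⟩. Then I is also finitely generated as a two-sided ideal of R. -/
/-- The free non-unital associative `K`-algebra on `X`: the semigroup algebra of the free
semigroup `X⁺` over `K`. -/
abbrev FreeNUAlg (K X : Type*) [CommRing K] : Type _ := MonoidAlgebra K (FreeSemigroup X)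

/-- The two-sided ideal (as a `K`-submodule closed under left and right multiplication)
generated by a set in a non-unital `K`-algebra. -/
def idealSpan (K : Type*) {A : Type*} [CommRing K] [NonUnitalRing A] [Module K A]
    (s : Set A) : Submodule K A :=
  sInf {J : Submodule K A | s ⊆ J ∧ ∀ a b : A, b ∈ J → a * b ∈ J ∧ b * a ∈ J}

/-- A non-unital `K`-algebra is finitely generated if some finite subset generates it as a
`K`-algebra. -/
def NUAlgFG (K A : Type*) [CommRing K] [NonUnitalRing A] [Module K A]
    [IsScalarTower K A A] [SMulCommClass K A A] : Prop :=
  ∃ s : Finset A, NonUnitalAlgebra.adjoin K (s : Set A) = ⊤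

/-- A non-unital `K`-algebra is finitely presented if it is isomorphic to the quotient of a
free algebra `K⟨X⟩` on a finite set `X` by a finitely generated two-sided ideal, i.e. there
is a surjection from some `K⟨X⟩`, `X` finite, whose kernel is a finitely generated
two-sided ideal. -/
def NUAlgFP (K A : Type*) [CommRing K] [NonUnitalRing A] [Module K A]
    [IsScalarTower K A A] [SMulCommClass K A A] : Prop :=
  ∃ (n : ℕ) (f : FreeNUAlg K (Fin n) →ₙₐ[K] A),
    Function.Surjective f ∧
      ∃ s : Finset (FreeNUAlg K (Fin n)),
        ∀ x, f x = 0 ↔ x ∈ idealSpan K (s : Set (FreeNUAlg K (Fin n)))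

/-- The two-sided ideal of the subalgebra with carrier `S` generated by a subset `s ⊆ S`,
viewed as a `K`-submodule of the ambient algebra: the smallest `K`-submodule containing
`s` and closed under left and right multiplication by elements of `S`. -/
def idealSpanIn (K : Type*) {A : Type*} [CommRing K] [NonUnitalRing A] [Module K A]
    (S : Set A) (s : Set A) : Submodule K A :=
  sInf {J : Submodule K A | s ⊆ J ∧ ∀ a ∈ S, ∀ b ∈ J, a * b ∈ J ∧ b * a ∈ J}

section Aux

open Pointwise

variable {K A : Type*} [CommRing K] [NonUnitalRing A] [Module K A]

theorem aux_subset_idealSpan (s : Set A) : s ⊆ idealSpan K s := fun _ hx =>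
  Submodule.mem_sInf.mpr fun _ hJ => hJ.1 hx

theorem aux_idealSpan_mul (s : Set A) (a b : A) (hb : b ∈ idealSpan K s) :
    a * b ∈ idealSpan K s ∧ b * a ∈ idealSpan K s :=
  ⟨Submodule.mem_sInf.mpr fun J hJ => (hJ.2 a b (Submodule.mem_sInf.mp hb J hJ)).1,
   Submodule.mem_sInf.mpr fun J hJ => (hJ.2 a b (Submodule.mem_sInf.mp hb J hJ)).2⟩

theorem aux_idealSpan_le {s : Set A} {J : Submodule K A} (h1 : s ⊆ J)
    (h2 : ∀ a b : A, b ∈ J → a * b ∈ J ∧ b * a ∈ J) : idealSpan K s ≤ J :=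
  sInf_le ⟨h1, h2⟩

theorem aux_subset_idealSpanIn (S s : Set A) : s ⊆ idealSpanIn K S s := fun _ hx =>
  Submodule.mem_sInf.mpr fun _ hJ => hJ.1 hx

theorem aux_idealSpanIn_mul (S s : Set A) (a : A) (ha : a ∈ S) (b : A)
    (hb : b ∈ idealSpanIn K S s) :
    a * b ∈ idealSpanIn K S s ∧ b * a ∈ idealSpanIn K S s :=
  ⟨Submodule.mem_sInf.mpr fun J hJ => (hJ.2 a ha b (Submodule.mem_sInf.mp hb J hJ)).1,
   Submodule.mem_sInf.mpr fun J hJ => (hJ.2 a ha b (Submodule.mem_sInf.mp hb J hJ)).2⟩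

theorem aux_idealSpanIn_le {S s : Set A} {J : Submodule K A} (h1 : s ⊆ J)
    (h2 : ∀ a ∈ S, ∀ b ∈ J, a * b ∈ J ∧ b * a ∈ J) : idealSpanIn K S s ≤ J :=
  sInf_le ⟨h1, h2⟩

end Aux

open Pointwise in
/-- Let `K` be a commutative ring with identity, `K⟨X⟩` a free
`K`-algebra, `R` a `K`-subalgebra of `K⟨X⟩` such that `K⟨X⟩/R` is a finitely generated
`K`-module, and `I ⊆ R` a two-sided ideal of `K⟨X⟩` that is finitely generated as an
ideal of `K⟨X⟩`. Then `I` is also finitely generated as a two-sided ideal of `R`. -/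
theorem ideal_fg_in_subalgebra_of_finite_corank
    (K X : Type*) [CommRing K]
    (R : NonUnitalSubalgebra K (FreeNUAlg K X))
    (hcorank : Module.Finite K (FreeNUAlg K X ⧸ R.toSubmodule))
    (I : Submodule K (FreeNUAlg K X))
    (hIR : I ≤ R.toSubmodule)
    (hIfg : ∃ s : Finset (FreeNUAlg K X), I = idealSpan K (s : Set (FreeNUAlg K X))) :
    ∃ t : Finset (FreeNUAlg K X), (t : Set (FreeNUAlg K X)) ⊆ (I : Set (FreeNUAlg K X)) ∧
      I = idealSpanIn K (R : Set (FreeNUAlg K X)) (t : Set (FreeNUAlg K X)) := by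
  classical
  set F := FreeNUAlg K X
  obtain ⟨s, hs⟩ := hIfg
  -- a finite set E of lifts of generators of F ⧸ R
  obtain ⟨Q, hQ⟩ := Module.finite_def.mp hcorank
  set π := R.toSubmodule.mkQ with hπdef
  have hπ : Function.Surjective π := Submodule.mkQ_surjective _
  set E : Finset F := Q.image (Function.surjInv hπ) with hEdef
  -- decomposition of an arbitrary element of F
  have hdec : ∀ f : F, ∃ r ∈ R.toSubmodule, ∃ z ∈ Submodule.span K (E : Set F), f = r + z := by
    intro f
    have h1 : π f ∈ Submodule.span K (Q : Set (F ⧸ R.toSubmodule)) := by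
      rw [hQ]; trivial
    have h2 : (Q : Set (F ⧸ R.toSubmodule)) ⊆ π '' (E : Set F) := by
      intro q hq
      exact ⟨Function.surjInv hπ q, by simp [hEdef]; exact ⟨q, hq, rfl⟩,
        Function.surjInv_eq hπ q⟩
    have h3 : π f ∈ Submodule.map π (Submodule.span K (E : Set F)) := by
      rw [Submodule.map_span]
      exact Submodule.span_mono h2 h1
    obtain ⟨z, hz, hzf⟩ := h3
    refine ⟨f - z, ?_, z, hz, by abel⟩
    have h0 : π (f - z) = 0 := by rw [map_sub, hzf, sub_self]
    rwa [hπdef, Submodule.mkQ_apply, Submodule.Quotient.mk_eq_zero] at h0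
  -- the generating set
  set t0 : Set F := ↑s ∪ (E : Set F) * ↑s ∪ ↑s * (E : Set F) ∪ (E : Set F) * ↑s * (E : Set F)
    with ht0def
  have ht0fin : t0.Finite :=
    (((s.finite_toSet.union (E.finite_toSet.mul s.finite_toSet)).union
      (s.finite_toSet.mul E.finite_toSet)).union
      ((E.finite_toSet.mul s.finite_toSet).mul E.finite_toSet))
  refine ⟨ht0fin.toFinset, ?_, ?_⟩
  · -- t0 ⊆ I
    rw [Set.Finite.coe_toFinset]
    have hsI : (↑s : Set F) ⊆ (I : Set F) := by
      rw [hs]; exact aux_subset_idealSpan _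
    intro x hx
    rcases hx with ((hx | hx) | hx) | hx
    · exact hsI hx
    · obtain ⟨e, _, a, ha, rfl⟩ := hx
      rw [hs] at hsI ⊢
      exact (aux_idealSpan_mul _ e a (hsI ha)).1
    · obtain ⟨a, ha, e, _, rfl⟩ := hx
      rw [hs] at hsI ⊢
      exact (aux_idealSpan_mul _ e a (hsI ha)).2
    · obtain ⟨y, hy, e', _, rfl⟩ := hx
      obtain ⟨e, _, a, ha, rfl⟩ := hy
      rw [hs] at hsI ⊢
      exact (aux_idealSpan_mul _ e' _ (aux_idealSpan_mul _ e a (hsI ha)).1).2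
  · -- I = idealSpanIn K R t0
    rw [Set.Finite.coe_toFinset]
    set M : Submodule K F := idealSpanIn K (R : Set F) t0 with hMdef
    have ht0M : t0 ⊆ (M : Set F) := aux_subset_idealSpanIn _ _
    have hMR : ∀ a ∈ (R : Set F), ∀ b ∈ M, a * b ∈ M ∧ b * a ∈ M := by
      intro a ha b hb
      exact aux_idealSpanIn_mul _ _ a ha b hb
    -- key closure lemmas
    have lem_left : ∀ x ∈ M, (∀ e ∈ (E : Set F), e * x ∈ M) → ∀ f : F, f * x ∈ M := by
      intro x hx he f
      obtain ⟨r, hr, z, hz, rfl⟩ := hdec f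
      rw [add_mul]
      refine M.add_mem ((hMR r hr x hx).1) ?_
      refine Submodule.span_induction (p := fun z _ => z * x ∈ M) ?_ ?_ ?_ ?_ hz
      · exact fun e hez => he e hez
      · simpa using M.zero_mem
      · intro y z _ _ hy hz; rw [add_mul]; exact M.add_mem hy hz
      · intro c y _ hy; rw [smul_mul_assoc]; exact M.smul_mem c hy
    have lem_right : ∀ x ∈ M, (∀ e ∈ (E : Set F), x * e ∈ M) → ∀ f : F, x * f ∈ M := by
      intro x hx he f
      obtain ⟨r, hr, z, hz, rfl⟩ := hdec f
      rw [mul_add]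
      refine M.add_mem ((hMR r hr x hx).2) ?_
      refine Submodule.span_induction (p := fun z _ => x * z ∈ M) ?_ ?_ ?_ ?_ hz
      · exact fun e hez => he e hez
      · simpa using M.zero_mem
      · intro y z _ _ hy hz; rw [mul_add]; exact M.add_mem hy hz
      · intro c y _ hy; rw [mul_smul_comm]; exact M.smul_mem c hy
    -- membership of products with generators from s
    have hsM : (↑s : Set F) ⊆ (M : Set F) := fun x hx =>
      ht0M (by rw [ht0def]; exact Or.inl (Or.inl (Or.inl hx)))
    have hesM : ∀ e ∈ (E : Set F), ∀ a ∈ (↑s : Set F), e * a ∈ M := fun e he a ha =>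
      ht0M (by rw [ht0def]; exact Or.inl (Or.inl (Or.inr ⟨e, he, a, ha, rfl⟩)))
    have hseM : ∀ a ∈ (↑s : Set F), ∀ e ∈ (E : Set F), a * e ∈ M := fun a ha e he =>
      ht0M (by rw [ht0def]; exact Or.inl (Or.inr ⟨a, ha, e, he, rfl⟩))
    have heseM : ∀ e ∈ (E : Set F), ∀ a ∈ (↑s : Set F), ∀ e' ∈ (E : Set F),
        e * a * e' ∈ M := fun e he a ha e' he' =>
      ht0M (by rw [ht0def]; exact Or.inr ⟨e * a, ⟨e, he, a, ha, rfl⟩, e', he', rfl⟩)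
    have claim1 : ∀ a ∈ (↑s : Set F), ∀ f : F, f * a ∈ M := fun a ha =>
      lem_left a (hsM ha) (fun e he => hesM e he a ha)
    have claim2 : ∀ a ∈ (↑s : Set F), ∀ g : F, a * g ∈ M := fun a ha =>
      lem_right a (hsM ha) (fun e he => hseM a ha e he)
    have claim3 : ∀ a ∈ (↑s : Set F), ∀ f g : F, f * a * g ∈ M := by
      intro a ha f g
      rw [mul_assoc]
      refine lem_left (a * g) (claim2 a ha g) ?_ f
      intro e he
      rw [← mul_assoc]
      exact lem_right (e * a) (hesM e he a ha)
        (fun e' he' => heseM e he a ha e' he') g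
    -- the auxiliary submodule M'
    set M' : Submodule K F :=
      { carrier := {b | b ∈ M ∧ ∀ f g : F, f * b ∈ M ∧ b * f ∈ M ∧ f * b * g ∈ M}
        add_mem' := by
          rintro a b ⟨haM, ha⟩ ⟨hbM, hb⟩
          refine ⟨M.add_mem haM hbM, fun f g => ?_⟩
          refine ⟨?_, ?_, ?_⟩
          · rw [mul_add]; exact M.add_mem (ha f g).1 (hb f g).1
          · rw [add_mul]; exact M.add_mem (ha f g).2.1 (hb f g).2.1
          · rw [mul_add, add_mul]; exact M.add_mem (ha f g).2.2 (hb f g).2.2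
        zero_mem' := by
          refine ⟨M.zero_mem, fun f g => ?_⟩
          simp only [mul_zero, zero_mul]
          exact ⟨M.zero_mem, M.zero_mem, M.zero_mem⟩
        smul_mem' := by
          rintro c b ⟨hbM, hb⟩
          refine ⟨M.smul_mem c hbM, fun f g => ?_⟩
          refine ⟨?_, ?_, ?_⟩
          · rw [mul_smul_comm]; exact M.smul_mem c (hb f g).1
          · rw [smul_mul_assoc]; exact M.smul_mem c (hb f g).2.1
          · rw [mul_smul_comm, smul_mul_assoc]; exact M.smul_mem c (hb f g).2.2 } with hM'def
    have hsM' : (↑s : Set F) ⊆ (M' : Set F) := by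
      intro a ha
      exact ⟨hsM ha, fun f g => ⟨claim1 a ha f, claim2 a ha f, claim3 a ha f g⟩⟩
    have hM'closed : ∀ a b : F, b ∈ M' → a * b ∈ M' ∧ b * a ∈ M' := by
      rintro a b ⟨hbM, hb⟩
      constructor
      · refine ⟨(hb a a).1, fun f g => ⟨?_, ?_, ?_⟩⟩
        · have h := (hb (f * a) g).1
          simp only [mul_assoc] at h ⊢; exact h
        · exact (hb a f).2.2
        · have h := (hb (f * a) g).2.2
          simp only [mul_assoc] at h ⊢; exact h
      · refine ⟨(hb a a).2.1, fun f g => ⟨?_, ?_, ?_⟩⟩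
        · have h := (hb f a).2.2
          simp only [mul_assoc] at h ⊢; exact h
        · have h := (hb (a * f) g).2.1
          simp only [mul_assoc] at h ⊢; exact h
        · have h := (hb f (a * g)).2.2
          simp only [mul_assoc] at h ⊢; exact h
    apply le_antisymm
    · -- I ≤ M via M'
      rw [hs]
      have : idealSpan K (↑s : Set F) ≤ M' := aux_idealSpan_le hsM' hM'closed
      exact fun x hx => (this hx).1
    · -- M ≤ I
      refine aux_idealSpanIn_le ?_ ?_
      · -- t0 ⊆ I : same as before
        have hsI : (↑s : Set F) ⊆ (I : Set F) := by
          rw [hs]; exact aux_subset_idealSpan _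
        intro x hx
        rcases hx with ((hx | hx) | hx) | hx
        · exact hsI hx
        · obtain ⟨e, _, a, ha, rfl⟩ := hx
          rw [hs] at hsI ⊢
          exact (aux_idealSpan_mul _ e a (hsI ha)).1
        · obtain ⟨a, ha, e, _, rfl⟩ := hx
          rw [hs] at hsI ⊢
          exact (aux_idealSpan_mul _ e a (hsI ha)).2
        · obtain ⟨y, hy, e', _, rfl⟩ := hx
          obtain ⟨e, _, a, ha, rfl⟩ := hy
          rw [hs] at hsI ⊢
          exact (aux_idealSpan_mul _ e' _ (aux_idealSpan_mul _ e a (hsI ha)).1).2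
      · intro a _ b hb
        rw [hs] at hb ⊢
        exact aux_idealSpan_mul _ a b hb
end

section
/- Let K be a commutative ring, let A be a (not necessarily unital) associative K-algebra, and let B be a two-sided ideal of A such that the quotient A/B is a finitely presented K-module. Then the quotient algebra A/B is finitely presented as a K-algebra. -/
/-!
Pick module generators `c₁, …, cₙ` of `C` and write each product `cᵢ cⱼ` as a linear
combination `∑ₖ λᵢⱼₖ cₖ`. Modulo the ideal generated by the finitely many relations
`xᵢ xⱼ - ∑ₖ λᵢⱼₖ xₖ`, every element of the free algebra on `x₁, …, xₙ` is congruent to a linear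
form in the `xᵢ`, by induction on word length. A linear form maps to `0` under `xᵢ ↦ cᵢ` exactly
when it lies in the kernel of `Kⁿ → C`, which is finitely generated because `C` is a finitely
presented module; adding its generators as relations cuts out the whole kernel.
-/

section IdealSpan

variable {K A : Type*} [CommRing K] [NonUnitalRing A] [Module K A] {s : Set A}

theorem subset_idealSpan : s ⊆ idealSpan K s :=
  fun _ hx => Submodule.mem_sInf.2 fun _ hJ => hJ.1 hx

theorem span_le_idealSpan : Submodule.span K s ≤ idealSpan K s :=
  Submodule.span_le.2 subset_idealSpan

theorem mul_mem_idealSpan_left (a : A) {b : A} (hb : b ∈ idealSpan K s) :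
    a * b ∈ idealSpan K s :=
  Submodule.mem_sInf.2 fun J hJ => (hJ.2 a b (Submodule.mem_sInf.1 hb J hJ)).1

theorem mul_mem_idealSpan_right (a : A) {b : A} (hb : b ∈ idealSpan K s) :
    b * a ∈ idealSpan K s :=
  Submodule.mem_sInf.2 fun J hJ => (hJ.2 a b (Submodule.mem_sInf.1 hb J hJ)).2

theorem idealSpan_le {J : Submodule K A} (hs : s ⊆ J)
    (hJ : ∀ a b : A, b ∈ J → a * b ∈ J ∧ b * a ∈ J) : idealSpan K s ≤ J :=
  sInf_le ⟨hs, hJ⟩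

theorem NonUnitalAlgHom.eq_zero_of_mem_idealSpan {C : Type*} [NonUnitalRing C] [Module K C]
    (φ : A →ₙₐ[K] C) (hs : ∀ x ∈ s, φ x = 0) {x : A} (hx : x ∈ idealSpan K s) : φ x = 0 :=
  idealSpan_le (J := LinearMap.ker (φ : A →ₗ[K] C)) hs
    (fun a b hb => by simp_all [LinearMap.mem_ker]) hx

end IdealSpan

namespace FreeNUAlg

open MonoidAlgebra

variable (K : Type*) [CommRing K] {X : Type*}

noncomputable def degreeOne [Fintype X] : (X → K) →ₗ[K] FreeNUAlg K X :=
  Fintype.linearCombination K fun i => single (FreeSemigroup.of i) 1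

theorem degreeOne_mul_degreeOne [Fintype X] (v w : X → K) :
    degreeOne K v * degreeOne K w =
      ∑ p : X × X, (v p.1 * w p.2) • single (FreeSemigroup.of p.1 * FreeSemigroup.of p.2) 1 := by
  rw [degreeOne, Fintype.linearCombination_apply, Fintype.linearCombination_apply,
    Finset.sum_mul_sum, ← Finset.sum_product']
  refine Finset.sum_congr rfl fun p _ => ?_
  rw [smul_mul_smul_comm, single_mul_single, one_mul]

variable {K}

noncomputable def mulRelation [Fintype X] (lam : X × X → X → K) (p : X × X) : FreeNUAlg K X :=
  single (FreeSemigroup.of p.1 * FreeSemigroup.of p.2) 1 - degreeOne K (lam p)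

section Reduction

variable [Fintype X] {lam : X × X → X → K} {s : Set (FreeNUAlg K X)}

theorem degreeOne_mul_degreeOne_sub_mem (hs : Set.range (mulRelation lam) ⊆ s) (v w : X → K) :
    degreeOne K v * degreeOne K w - degreeOne K (∑ p : X × X, (v p.1 * w p.2) • lam p) ∈
      idealSpan K s := by
  rw [degreeOne_mul_degreeOne, map_sum, ← Finset.sum_sub_distrib]
  refine Submodule.sum_mem _ fun p _ => ?_
  rw [map_smul, ← smul_sub]
  exact Submodule.smul_mem _ _ (subset_idealSpan (hs ⟨p, rfl⟩))

theorem exists_single_one_sub_degreeOne_mem (hs : Set.range (mulRelation lam) ⊆ s)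
    (g : FreeSemigroup X) : ∃ v, single g (1 : K) - degreeOne K v ∈ idealSpan K s := by
  induction g using FreeSemigroup.recOnMul with
  | ih1 i =>
    classical
    exact ⟨Pi.single i 1, by simp [degreeOne]⟩
  | ih2 i g hi hg =>
    obtain ⟨v, hv⟩ := hi
    obtain ⟨w, hw⟩ := hg
    refine ⟨∑ p : X × X, (v p.1 * w p.2) • lam p, ?_⟩
    have hsplit : single (FreeSemigroup.of i * g) (1 : K) -
          degreeOne K (∑ p : X × X, (v p.1 * w p.2) • lam p) =
        single (FreeSemigroup.of i) 1 * (single g 1 - degreeOne K w) +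
          (single (FreeSemigroup.of i) 1 - degreeOne K v) * degreeOne K w +
          (degreeOne K v * degreeOne K w - degreeOne K (∑ p : X × X, (v p.1 * w p.2) • lam p)) := by
      rw [← one_mul (1 : K), ← single_mul_single]
      noncomm_ring
    rw [hsplit]
    exact add_mem (add_mem (mul_mem_idealSpan_left _ hw) (mul_mem_idealSpan_right _ hv))
      (degreeOne_mul_degreeOne_sub_mem hs v w)

theorem exists_sub_degreeOne_mem (hs : Set.range (mulRelation lam) ⊆ s) (x : FreeNUAlg K X) :
    ∃ v, x - degreeOne K v ∈ idealSpan K s := by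
  induction x using MonoidAlgebra.induction_linear with
  | zero => exact ⟨0, by simp⟩
  | add x y hx hy =>
    obtain ⟨v, hv⟩ := hx
    obtain ⟨w, hw⟩ := hy
    exact ⟨v + w, by simpa only [map_add, add_sub_add_comm] using add_mem hv hw⟩
  | single g k =>
    obtain ⟨v, hv⟩ := exists_single_one_sub_degreeOne_mem hs g
    exact ⟨k • v, by simpa [smul_sub, smul_single] using Submodule.smul_mem _ k hv⟩

end Reduction

variable {C : Type*} [NonUnitalRing C] [Module K C] [IsScalarTower K C C]
  [SMulCommClass K C C]

noncomputable def lift (c : X → C) : FreeNUAlg K X →ₙₐ[K] C :=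
  liftMagma K (FreeSemigroup.lift c)

theorem lift_single_one (c : X → C) (g : FreeSemigroup X) :
    lift c (single g (1 : K)) = FreeSemigroup.lift c g :=
  DFunLike.congr_fun ((liftMagma K).symm_apply_apply (FreeSemigroup.lift c)) g

theorem lift_degreeOne [Fintype X] (c : X → C) (v : X → K) :
    lift c (degreeOne K v) = Fintype.linearCombination K c v := by
  simp only [degreeOne, Fintype.linearCombination_apply, map_sum, map_smul, lift_single_one,
    FreeSemigroup.lift_of]

theorem lift_eq_zero_iff [Fintype X] {c : X → C} {lam : X × X → X → K}
    (hlam : ∀ p, Fintype.linearCombination K c (lam p) = c p.1 * c p.2) {t : Set (X → K)}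
    (ht : Submodule.span K t = LinearMap.ker (Fintype.linearCombination K c))
    {x : FreeNUAlg K X} :
    lift c x = 0 ↔ x ∈ idealSpan K (Set.range (mulRelation lam) ∪ degreeOne K '' t) := by
  set s := Set.range (mulRelation lam) ∪ degreeOne K '' t
  have hrel : ∀ y ∈ s, lift c y = 0 := by
    rintro _ (⟨p, rfl⟩ | ⟨v, hv, rfl⟩)
    · rw [mulRelation, map_sub, lift_single_one, lift_degreeOne, hlam, map_mul,
        FreeSemigroup.lift_of, FreeSemigroup.lift_of, sub_self]
    · rw [lift_degreeOne, ← LinearMap.mem_ker, ← ht]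
      exact Submodule.subset_span hv
  refine ⟨fun hx => ?_, fun hx => (lift c).eq_zero_of_mem_idealSpan hrel hx⟩
  obtain ⟨v, hv⟩ := exists_sub_degreeOne_mem Set.subset_union_left x
  have hv_ker : v ∈ Submodule.span K t := by
    have h0 := (lift c).eq_zero_of_mem_idealSpan hrel hv
    rw [map_sub, hx, zero_sub, neg_eq_zero, lift_degreeOne] at h0
    rw [ht]
    exact h0
  have hv_rel : degreeOne K v ∈ idealSpan K s := by
    refine span_le_idealSpan (Submodule.span_mono Set.subset_union_right ?_)
    rw [← Submodule.map_span]
    exact Submodule.mem_map_of_mem hv_ker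
  simpa using add_mem hv hv_rel

end FreeNUAlg

open FreeNUAlg in
theorem NUAlgFP.of_finitePresentation {K C : Type*} [CommRing K] [NonUnitalRing C] [Module K C]
    [IsScalarTower K C C] [SMulCommClass K C C] [Module.FinitePresentation K C] :
    NUAlgFP K C := by
  classical
  obtain ⟨n, c, hc⟩ := Module.Finite.exists_fin (R := K) (M := C)
  have hsurj : Function.Surjective (Fintype.linearCombination K c) := by
    rw [← LinearMap.range_eq_top, Fintype.range_linearCombination, hc]
  obtain ⟨t, ht⟩ := Module.FinitePresentation.fg_ker _ hsurj
  choose lam hlam using fun p : Fin n × Fin n => hsurj (c p.1 * c p.2)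
  refine ⟨n, lift c, fun y => ?_,
    Finset.univ.image (mulRelation lam) ∪ t.image (degreeOne K), fun x => ?_⟩
  · obtain ⟨v, rfl⟩ := hsurj y
    exact ⟨degreeOne K v, lift_degreeOne c v⟩
  · rw [Finset.coe_union, Finset.coe_image, Finset.coe_image, Finset.coe_univ, Set.image_univ]
    exact lift_eq_zero_iff hlam ht

theorem quotient_fp_of_quotient_module_fp_general
    (K A C : Type*) [CommRing K]
    [NonUnitalRing A] [Module K A]
    [NonUnitalRing C] [Module K C] [IsScalarTower K C C] [SMulCommClass K C C]
    (B : NonUnitalSubalgebra K A)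
    (hmod : Module.FinitePresentation K (A ⧸ B.toSubmodule))
    (f : A →ₙₐ[K] C) (hf : Function.Surjective f) (hker : ∀ x : A, f x = 0 ↔ x ∈ B) :
    NUAlgFP K C := by
  have hker' : LinearMap.ker (f : A →ₗ[K] C) = B.toSubmodule := Submodule.ext hker
  have : Module.FinitePresentation K C := .of_equiv <|
    (Submodule.quotEquivOfEq _ _ hker'.symm).trans ((f : A →ₗ[K] C).quotKerEquivOfSurjective hf)
  exact NUAlgFP.of_finitePresentation

/-- Let `K` be a commutative ring, `A` a (not necessarily unital)
associative `K`-algebra and `B` a two-sided ideal of `A` (a `K`-subalgebra closed under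
left and right multiplication by arbitrary elements of `A`) such that the quotient `A/B`
is a finitely presented `K`-module. Then the quotient algebra `A/B` — realized as any
`K`-algebra `C` together with a surjective homomorphism `A → C` with kernel `B` — is
finitely presented as a `K`-algebra. -/
theorem quotient_fp_of_quotient_module_fp
    (K A C : Type*) [CommRing K]
    [NonUnitalRing A] [Module K A] [IsScalarTower K A A] [SMulCommClass K A A]
    [NonUnitalRing C] [Module K C] [IsScalarTower K C C] [SMulCommClass K C C]
    (B : NonUnitalSubalgebra K A)
    (hBl : ∀ a b : A, b ∈ B → a * b ∈ B) (hBr : ∀ a b : A, b ∈ B → b * a ∈ B)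
    (hmod : Module.FinitePresentation K (A ⧸ B.toSubmodule))
    (f : A →ₙₐ[K] C) (hf : Function.Surjective f) (hker : ∀ x : A, f x = 0 ↔ x ∈ B) :
    NUAlgFP K C :=
  quotient_fp_of_quotient_module_fp_general K A C B hmod f hf hker
end
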